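/- arXiv:1110.6664 — 5 statements merged into one kernel-verified Lean document; each statement's English description precedes it below -/
import Mathlib

section
/- Let λ > 0, γ > 0, k > 0 with k² ≥ 2λ, and set λ₁ = k − √(k² − 2λ), λ₂ = k + √(k² − 2λ). If ξ₁ and ξ₂ are independent random variables with ξ₁ ~ Gamma(γ, λ₁) and ξ₂ ~ Gamma(γ, λ₂), then the Laplace transform of ξ = ξ₁ + ξ₂ equals f̂(ks + s²/2), where f̂(s) = (λ/(λ+s))^γ is the Laplace transform of the Gamma(γ, λ) distribution. -/
/-!
Under `Gamma(a, r)` the weight `exp (t x)` only shifts the rate: `exp (t x)` times the density of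
`Gamma(a, r)` is `(r / (r - t)) ^ a` times the density of `Gamma(a, r - t)`, so the Laplace transform
of `Gamma(γ, λᵢ)` at `s` is `(λᵢ / (λᵢ + s)) ^ γ`. By independence the Laplace transform of
`ξ₁ + ξ₂` is the product of the two, and since `λ₁, λ₂` are the roots of `x² - 2 k x + 2 λ`,
`(λ₁ + s) (λ₂ + s) = 2 (λ + k s + s² / 2)` while `λ₁ λ₂ = 2 λ`.
-/

open MeasureTheory ProbabilityTheory Real

lemma exp_mul_gammaPDF {a r t : ℝ} (hr : 0 ≤ r) (ht : t < r) (x : ℝ) :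
    ENNReal.ofReal (exp (t * x)) * gammaPDF a r x
      = ENNReal.ofReal ((r / (r - t)) ^ a) * gammaPDF a (r - t) x := by
  rcases lt_or_ge x 0 with hx | hx
  · rw [gammaPDF_of_neg hx, gammaPDF_of_neg hx, mul_zero, mul_zero]
  have hrt : 0 < r - t := by linarith
  rw [gammaPDF_of_nonneg hx, gammaPDF_of_nonneg hx, ← ENNReal.ofReal_mul (exp_pos _).le,
    ← ENNReal.ofReal_mul (by positivity)]
  congr 1
  have hexp : exp (-((r - t) * x)) = exp (t * x) * exp (-(r * x)) := by
    rw [← exp_add]; ring_nf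
  rw [div_rpow hr hrt.le, hexp]
  field_simp

lemma mgf_id_gammaMeasure {a r t : ℝ} (ha : 0 < a) (hr : 0 < r) (ht : t < r) :
    mgf id (gammaMeasure a r) t = (r / (r - t)) ^ a := by
  have hrt : 0 < r - t := by linarith
  rw [mgf, integral_eq_lintegral_of_nonneg_ae (ae_of_all _ fun x => (exp_pos _).le)
      (by fun_prop), gammaMeasure,
    lintegral_withDensity_eq_lintegral_mul _
      (show Measurable (gammaPDF a r) from (measurable_gammaPDFReal a r).ennreal_ofReal)
      (by fun_prop)]
  simp only [Pi.mul_apply, id, mul_comm (gammaPDF a r _), exp_mul_gammaPDF hr.le ht]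
  rw [lintegral_const_mul _
      (show Measurable (gammaPDF a (r - t)) from (measurable_gammaPDFReal a (r - t)).ennreal_ofReal),
    lintegral_gammaPDF_eq_one ha hrt, mul_one, ENNReal.toReal_ofReal (by positivity)]

lemma sub_sqrt_div_mul_add_sqrt_div {lam k : ℝ} (hk : 2 * lam ≤ k ^ 2) (s : ℝ) :
    (k - √(k ^ 2 - 2 * lam)) / (k - √(k ^ 2 - 2 * lam) + s)
        * ((k + √(k ^ 2 - 2 * lam)) / (k + √(k ^ 2 - 2 * lam) + s))
      = lam / (lam + (k * s + s ^ 2 / 2)) := by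
  have hsq : √(k ^ 2 - 2 * lam) ^ 2 = k ^ 2 - 2 * lam := sq_sqrt (by linarith)
  have hnum : (k - √(k ^ 2 - 2 * lam)) * (k + √(k ^ 2 - 2 * lam)) = 2 * lam := by
    linear_combination -hsq
  have hden : (k - √(k ^ 2 - 2 * lam) + s) * (k + √(k ^ 2 - 2 * lam) + s)
      = 2 * (lam + (k * s + s ^ 2 / 2)) := by
    linear_combination -hsq
  rw [div_mul_div_comm, hnum, hden, mul_div_mul_left _ _ two_ne_zero]

theorem gamma_sum_solves_shiryaev_general
    {Ω : Type*} [MeasureSpace Ω]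
    (lam gam k : ℝ) (hlam : 0 < lam) (hgam : 0 < gam) (hk : 0 < k)
    (hk2 : 2 * lam ≤ k ^ 2)
    (lam₁ lam₂ : ℝ)
    (hlam₁ : lam₁ = k - Real.sqrt (k ^ 2 - 2 * lam))
    (hlam₂ : lam₂ = k + Real.sqrt (k ^ 2 - 2 * lam))
    (ξ₁ ξ₂ : Ω → ℝ) (h₁m : Measurable ξ₁) (h₂m : Measurable ξ₂)
    (hindep : IndepFun ξ₁ ξ₂)
    (h₁ : Measure.map ξ₁ volume = gammaMeasure gam lam₁)
    (h₂ : Measure.map ξ₂ volume = gammaMeasure gam lam₂) :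
    ∀ s : ℝ, 0 ≤ s →
      (∫ ω, Real.exp (-s * (ξ₁ ω + ξ₂ ω)))
        = (lam / (lam + (k * s + s ^ 2 / 2))) ^ gam := by
  intro s hs
  have hsqrt : √(k ^ 2 - 2 * lam) < k := (sqrt_lt' hk).2 (by linarith)
  have hlam₁_pos : 0 < lam₁ := by rw [hlam₁]; linarith
  have hlam₂_pos : 0 < lam₂ := by rw [hlam₂]; positivity
  calc (∫ ω, exp (-s * (ξ₁ ω + ξ₂ ω)))
      = mgf ξ₁ volume (-s) * mgf ξ₂ volume (-s) :=
        hindep.mgf_add' h₁m.aestronglyMeasurable h₂m.aestronglyMeasurable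
    _ = (lam₁ / (lam₁ + s)) ^ gam * (lam₂ / (lam₂ + s)) ^ gam := by
        rw [← mgf_id_map h₁m.aemeasurable, ← mgf_id_map h₂m.aemeasurable, h₁, h₂,
          mgf_id_gammaMeasure hgam hlam₁_pos (by linarith),
          mgf_id_gammaMeasure hgam hlam₂_pos (by linarith), sub_neg_eq_add, sub_neg_eq_add]
    _ = (lam / (lam + (k * s + s ^ 2 / 2))) ^ gam := by
        rw [← mul_rpow (by positivity) (by positivity), hlam₁, hlam₂,
          sub_sqrt_div_mul_add_sqrt_div hk2]

/-- Theorem 2: if `ξ₁ ~ Gamma(γ, λ₁)` and `ξ₂ ~ Gamma(γ, λ₂)` are independent, with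
`λ₁ = k − √(k² − 2λ)`, `λ₂ = k + √(k² − 2λ)` (where `k² ≥ 2λ`), then the Laplace
transform of `ξ = ξ₁ + ξ₂` equals `f̂(ks + s²/2)`, where `f̂(s) = (λ/(λ+s))^γ` is
the Laplace transform of `Gamma(γ, λ)`. -/
theorem gamma_sum_solves_shiryaev
    {Ω : Type*} [MeasureSpace Ω] [IsProbabilityMeasure (volume : Measure Ω)]
    (lam gam k : ℝ) (hlam : 0 < lam) (hgam : 0 < gam) (hk : 0 < k)
    (hk2 : 2 * lam ≤ k ^ 2)
    (lam₁ lam₂ : ℝ)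
    (hlam₁ : lam₁ = k - Real.sqrt (k ^ 2 - 2 * lam))
    (hlam₂ : lam₂ = k + Real.sqrt (k ^ 2 - 2 * lam))
    (ξ₁ ξ₂ : Ω → ℝ) (h₁m : Measurable ξ₁) (h₂m : Measurable ξ₂)
    (hindep : IndepFun ξ₁ ξ₂)
    (h₁ : Measure.map ξ₁ volume = gammaMeasure gam lam₁)
    (h₂ : Measure.map ξ₂ volume = gammaMeasure gam lam₂) :
    ∀ s : ℝ, 0 ≤ s →
      (∫ ω, Real.exp (-s * (ξ₁ ω + ξ₂ ω)))
        = (lam / (lam + (k * s + s ^ 2 / 2))) ^ gam :=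
  gamma_sum_solves_shiryaev_general lam gam k hlam hgam hk hk2 lam₁ lam₂ hlam₁ hlam₂ ξ₁ ξ₂ h₁m h₂m
    hindep h₁ h₂
end

section
/- For 0 < k_* < k, the derivative u′(s) = (s + k)·(s² + 2ks + k_*²)^{−1/2} of u(s) = √(s² + 2ks + k_*²) − k_* is a completely monotone function on [0,∞); in particular, (−1)^{n+1} u^{(n)}(s) > 0 for all n ≥ 1 and s > 0. -/
open Set Real

/-- A function is completely monotone on `[0,∞)` if it is infinitely differentiable
there and `(−1)^n V^{(n)}(s) ≥ 0` for all `n ≥ 0` and `s ≥ 0`. -/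
def CompletelyMonotone (f : ℝ → ℝ) : Prop :=
  ContDiffOn ℝ (⊤ : ℕ∞) f (Set.Ici 0) ∧
    ∀ (n : ℕ), ∀ s ∈ Set.Ici (0 : ℝ),
      0 ≤ (-1 : ℝ) ^ n * iteratedDerivWithin n f (Set.Ici 0) s

namespace SubstCM

noncomputable def acoef : ℕ → ℝ := fun j => ∏ i ∈ Finset.range j, ((3:ℝ)/2 + i)

lemma acoef_succ (j : ℕ) : acoef (j+1) = acoef j * ((3:ℝ)/2 + j) :=
  Finset.prod_range_succ _ _

lemma acoef_pos (j : ℕ) : 0 < acoef j :=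
  Finset.prod_pos fun i _ => by positivity

noncomputable def ee (i : ℕ) : ℝ := -(3/2 : ℝ) - i

lemma ee_sub_one (i : ℕ) : ee i - 1 = ee (i+1) := by
  simp only [ee]; push_cast; ring

noncomputable def Wt (α β x : ℝ) (i m : ℕ) : ℝ :=
  acoef i * acoef m * (x - α) ^ (ee i) * (x - β) ^ (ee m)

lemma Wt_pos {α β x : ℝ} (hβα : β ≤ α) (hx : α < x) (i m : ℕ) :
    0 < Wt α β x i m := by
  have h1 : (0:ℝ) < x - α := sub_pos.2 hx
  have h2 : (0:ℝ) < x - β := sub_pos.2 (lt_of_le_of_lt hβα hx)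
  exact mul_pos (mul_pos (mul_pos (acoef_pos i) (acoef_pos m))
    (Real.rpow_pos_of_pos h1 _)) (Real.rpow_pos_of_pos h2 _)

lemma hasDerivAt_Wt {α β : ℝ} (hβα : β ≤ α) {x : ℝ} (hx : α < x) (i m : ℕ) :
    HasDerivAt (fun s => Wt α β s i m)
      (-(Wt α β x (i+1) m + Wt α β x i (m+1))) x := by
  have h1 : (0:ℝ) < x - α := sub_pos.2 hx
  have h2 : (0:ℝ) < x - β := sub_pos.2 (lt_of_le_of_lt hβα hx)
  have hA : HasDerivAt (fun s : ℝ => (s - α) ^ (ee i)) (1 * ee i * (x - α) ^ (ee i - 1)) x :=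
    ((hasDerivAt_id x).sub_const α).rpow_const (Or.inl h1.ne')
  have hB : HasDerivAt (fun s : ℝ => (s - β) ^ (ee m)) (1 * ee m * (x - β) ^ (ee m - 1)) x :=
    ((hasDerivAt_id x).sub_const β).rpow_const (Or.inl h2.ne')
  have h3 := (hA.const_mul (acoef i * acoef m)).mul hB
  refine h3.congr_deriv ?_
  rw [ee_sub_one i, ee_sub_one m]
  simp only [Wt, acoef_succ, ee]
  push_cast
  ring

noncomputable def Ssum (α β : ℝ) (n : ℕ) (x : ℝ) : ℝ :=
  ∑ j ∈ Finset.range (n+1), (n.choose j : ℝ) * Wt α β x j (n-j)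

lemma Ssum_pos {α β x : ℝ} (hβα : β ≤ α) (hx : α < x) (n : ℕ) :
    0 < Ssum α β n x := by
  refine Finset.sum_pos (fun j hj => ?_) ⟨0, by simp⟩
  have hjn : j ≤ n := Nat.lt_succ_iff.mp (Finset.mem_range.mp hj)
  exact mul_pos (by exact_mod_cast Nat.choose_pos hjn) (Wt_pos hβα hx _ _)

lemma Ssum_succ_eq (α β x : ℝ) (n : ℕ) :
    Ssum α β (n+1) x
      = ∑ j ∈ Finset.range (n+1), (n.choose j : ℝ) *
          (Wt α β x (j+1) (n-j) + Wt α β x j (n-j+1)) := by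
  have hL : Ssum α β (n+1) x
      = (∑ j ∈ Finset.range (n+1),
          (((n.choose j : ℝ) + (n.choose (j+1) : ℝ)) * Wt α β x (j+1) (n-j)))
        + Wt α β x 0 (n+1) := by
    rw [Ssum, Finset.sum_range_succ']
    congr 1
    · refine Finset.sum_congr rfl fun j hj => ?_
      have h1 : n + 1 - (j+1) = n - j := by omega
      rw [h1, Nat.choose_succ_succ]
      push_cast
      ring
    · simp
  have hR2 : (∑ j ∈ Finset.range (n+1), (n.choose j : ℝ) * Wt α β x j (n-j+1))
      = (∑ j ∈ Finset.range n, (n.choose (j+1) : ℝ) * Wt α β x (j+1) (n-j))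
        + Wt α β x 0 (n+1) := by
    rw [Finset.sum_range_succ']
    congr 1
    · refine Finset.sum_congr rfl fun j hj => ?_
      have hjn : j < n := Finset.mem_range.mp hj
      have h1 : n - (j+1) + 1 = n - j := by omega
      rw [h1]
    · simp
  have hR2' : (∑ j ∈ Finset.range (n+1), (n.choose (j+1) : ℝ) * Wt α β x (j+1) (n-j))
      = ∑ j ∈ Finset.range n, (n.choose (j+1) : ℝ) * Wt α β x (j+1) (n-j) := by
    rw [Finset.sum_range_succ]
    simp [Nat.choose_succ_self]
  have expand : ∑ j ∈ Finset.range (n+1), (n.choose j : ℝ) *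
          (Wt α β x (j+1) (n-j) + Wt α β x j (n-j+1))
      = (∑ j ∈ Finset.range (n+1), (n.choose j : ℝ) * Wt α β x (j+1) (n-j))
        + ∑ j ∈ Finset.range (n+1), (n.choose j : ℝ) * Wt α β x j (n-j+1) := by
    rw [← Finset.sum_add_distrib]
    exact Finset.sum_congr rfl fun j _ => by ring
  have expand2 : (∑ j ∈ Finset.range (n+1),
          (((n.choose j : ℝ) + (n.choose (j+1) : ℝ)) * Wt α β x (j+1) (n-j)))
      = (∑ j ∈ Finset.range (n+1), (n.choose j : ℝ) * Wt α β x (j+1) (n-j))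
        + ∑ j ∈ Finset.range (n+1), (n.choose (j+1) : ℝ) * Wt α β x (j+1) (n-j) := by
    rw [← Finset.sum_add_distrib]
    exact Finset.sum_congr rfl fun j _ => by ring
  rw [hL, expand, hR2, expand2, hR2']
  ring

lemma hasDerivAt_Ssum {α β : ℝ} (hβα : β ≤ α) {x : ℝ} (hx : α < x) (n : ℕ) :
    HasDerivAt (fun s => Ssum α β n s) (-(Ssum α β (n+1) x)) x := by
  have h : HasDerivAt (fun s => ∑ j ∈ Finset.range (n+1), (n.choose j : ℝ) * Wt α β s j (n-j))
      (∑ j ∈ Finset.range (n+1),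
        (n.choose j : ℝ) * (-(Wt α β x (j+1) (n-j) + Wt α β x j (n-j+1)))) x :=
    HasDerivAt.fun_sum fun j _ => (hasDerivAt_Wt hβα hx j (n-j)).const_mul _
  have h2 : (∑ j ∈ Finset.range (n+1),
        (n.choose j : ℝ) * (-(Wt α β x (j+1) (n-j) + Wt α β x j (n-j+1))))
      = -(Ssum α β (n+1) x) := by
    rw [Ssum_succ_eq, ← Finset.sum_neg_distrib]
    exact Finset.sum_congr rfl fun j _ => by ring
  rw [← h2]
  exact h

lemma iteratedDerivWithin_Ici_eq {f : ℝ → ℝ} {U : Set ℝ} (hU : IsOpen U)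
    (hsub : Set.Ici (0:ℝ) ⊆ U) (hf : ContDiffOn ℝ (⊤ : ℕ∞) f U) (n : ℕ) :
    ∀ x ∈ Set.Ici (0:ℝ), iteratedDerivWithin n f (Set.Ici 0) x = iteratedDeriv n f x := by
  induction n with
  | zero => intro x hx; simp [iteratedDerivWithin_zero, iteratedDeriv_zero]
  | succ n IH =>
    intro x hx
    have hux : UniqueDiffWithinAt ℝ (Set.Ici (0:ℝ)) x := uniqueDiffOn_Ici 0 x hx
    have hopen_eq : Set.EqOn (iteratedDerivWithin n f U) (iteratedDeriv n f) U := by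
      intro y hy
      simp only [iteratedDerivWithin, iteratedDeriv, iteratedFDerivWithin_of_isOpen n hU hy]
    have hdiff : DifferentiableAt ℝ (iteratedDeriv n f) x := by
      have h1 : DifferentiableOn ℝ (iteratedDerivWithin n f U) U :=
        hf.differentiableOn_iteratedDerivWithin (by exact_mod_cast ENat.coe_lt_top n) hU.uniqueDiffOn
      have h2 : DifferentiableAt ℝ (iteratedDerivWithin n f U) x :=
        (h1 x (hsub hx)).differentiableAt (hU.mem_nhds (hsub hx))
      exact h2.congr_of_eventuallyEq
        (Filter.eventuallyEq_of_mem (hU.mem_nhds (hsub hx)) fun y hy => (hopen_eq hy).symm)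
    rw [iteratedDerivWithin_succ]
    calc derivWithin (iteratedDerivWithin n f (Set.Ici 0)) (Set.Ici 0) x
        = derivWithin (iteratedDeriv n f) (Set.Ici 0) x :=
          derivWithin_congr (fun y hy => IH y hy) (IH x hx)
      _ = deriv (iteratedDeriv n f) x := hdiff.derivWithin hux
      _ = iteratedDeriv (n+1) f x := by rw [iteratedDeriv_succ]

end SubstCM

open SubstCM

/-- For `0 < k_* < k`, the derivative `u′(s) = (s + k)·(s² + 2ks + k_*²)^{−1/2}` of
`u(s) = √(s² + 2ks + k_*²) − k_*` is completely monotone on `[0,∞)`; in particular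
`(−1)^{n+1} u^{(n)}(s) > 0` for all `n ≥ 1` and `s > 0`. -/
theorem substitution_derivative_completelyMonotone
    (kst k : ℝ) (hkst : 0 < kst) (hk : kst < k)
    (u : ℝ → ℝ)
    (hu : ∀ s : ℝ, u s = Real.sqrt (s ^ 2 + 2 * k * s + kst ^ 2) - kst) :
    (∀ s : ℝ, 0 ≤ s →
        deriv u s = (s + k) * (s ^ 2 + 2 * k * s + kst ^ 2) ^ (-(1 : ℝ) / 2)) ∧
      CompletelyMonotone (fun s => deriv u s) ∧
      ∀ n : ℕ, 1 ≤ n → ∀ s : ℝ, 0 < s →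
        0 < (-1 : ℝ) ^ (n + 1) * iteratedDeriv n u s := by
  have hk0 : 0 < k := hkst.trans hk
  set c : ℝ := Real.sqrt (k^2 - kst^2) with hc_def
  have hc2 : c^2 = k^2 - kst^2 := Real.sq_sqrt (by nlinarith)
  have hc_pos : 0 < c := Real.sqrt_pos.mpr (by nlinarith)
  have hck : c < k := by nlinarith
  set α : ℝ := c - k with hα_def
  set β : ℝ := -c - k with hβ_def
  have hβα : β ≤ α := by rw [hα_def, hβ_def]; linarith
  have hα0 : α < 0 := by rw [hα_def]; linarith
  set U : Set ℝ := Set.Ioi α with hU_def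
  have hUopen : IsOpen U := isOpen_Ioi
  have hsub : Set.Ici (0:ℝ) ⊆ U := fun x hx => lt_of_lt_of_le hα0 hx
  have hQfact : ∀ s : ℝ, s^2 + 2*k*s + kst^2 = (s - α) * (s - β) := by
    intro s
    rw [hα_def, hβ_def]
    linear_combination hc2
  have hQpos : ∀ x ∈ U, 0 < x^2 + 2*k*x + kst^2 := by
    intro x hx
    rw [hQfact x]
    exact mul_pos (sub_pos.2 hx) (sub_pos.2 (lt_of_le_of_lt hβα hx))
  set f : ℝ → ℝ := fun s => (s + k) * (s ^ 2 + 2 * k * s + kst ^ 2) ^ (-(1 : ℝ) / 2)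
    with hf_def
  have hu_fun : u = fun s => Real.sqrt (s^2 + 2*k*s + kst^2) - kst := funext hu
  have hQder : ∀ x : ℝ, HasDerivAt (fun s : ℝ => s^2 + 2*k*s + kst^2) (2*x + 2*k) x := by
    intro x
    have h := ((hasDerivAt_pow 2 x).add ((hasDerivAt_id x).const_mul (2*k))).add_const (kst^2)
    refine h.congr_deriv ?_
    norm_num
  have hderivu : ∀ x ∈ U, HasDerivAt u (f x) x := by
    intro x hxU
    have hQx : 0 < x^2 + 2*k*x + kst^2 := hQpos x hxU
    have h1 : HasDerivAt (fun s => Real.sqrt (s^2 + 2*k*s + kst^2) - kst)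
        ((2*x + 2*k) / (2 * Real.sqrt (x^2 + 2*k*x + kst^2))) x :=
      ((hQder x).sqrt hQx.ne').sub_const kst
    rw [hu_fun]
    convert h1 using 1
    have hsq_pos : 0 < Real.sqrt (x^2 + 2*k*x + kst^2) := Real.sqrt_pos.mpr hQx
    have hrp : (x^2 + 2*k*x + kst^2) ^ (-(1:ℝ)/2)
        = (Real.sqrt (x^2 + 2*k*x + kst^2))⁻¹ := by
      rw [Real.sqrt_eq_rpow, ← Real.rpow_neg hQx.le]
      norm_num
    rw [hf_def]
    simp only
    rw [hrp]
    field_simp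
  have hS0 : ∀ x ∈ U, Ssum α β 0 x = (x^2 + 2*k*x + kst^2) ^ (-(3/2):ℝ) := by
    intro x hx
    have h1 : (0:ℝ) < x - α := sub_pos.2 hx
    have h2 : (0:ℝ) < x - β := sub_pos.2 (lt_of_le_of_lt hβα hx)
    rw [hQfact x, Real.mul_rpow h1.le h2.le]
    simp [Ssum, Wt, acoef, ee]
  have hfder : ∀ x ∈ U, HasDerivAt f (-(c^2) * Ssum α β 0 x) x := by
    intro x hx
    have hQx : 0 < x^2 + 2*k*x + kst^2 := hQpos x hx
    have h2 : HasDerivAt (fun s : ℝ => (s^2 + 2*k*s + kst^2) ^ (-(1:ℝ)/2))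
        ((2*x + 2*k) * (-(1:ℝ)/2) * (x^2 + 2*k*x + kst^2) ^ (-(1:ℝ)/2 - 1)) x :=
      (hQder x).rpow_const (Or.inl hQx.ne')
    have h3 := (((hasDerivAt_id x).add_const k).mul h2)
    rw [hf_def]
    refine h3.congr_deriv ?_
    rw [hS0 x hx]
    have e1 : (-(1:ℝ)/2 - 1) = (-(3/2):ℝ) := by norm_num
    have e2 : (x^2 + 2*k*x + kst^2) ^ (-(1:ℝ)/2)
        = (x^2 + 2*k*x + kst^2) * (x^2 + 2*k*x + kst^2) ^ (-(3/2):ℝ) := by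
      rw [show (-(1:ℝ)/2) = 1 + (-(3/2):ℝ) by norm_num, Real.rpow_add hQx, Real.rpow_one]
    rw [e1, e2]
    simp only [id_eq]
    linear_combination ((x^2 + 2*k*x + kst^2) ^ (-(3/2):ℝ)) * hc2
  have hfiter : ∀ n : ℕ, Set.EqOn (iteratedDeriv (n+1) f)
      (fun x => (-1:ℝ)^(n+1) * (c^2 * Ssum α β n x)) U := by
    intro n
    induction n with
    | zero =>
      intro x hx
      rw [iteratedDeriv_one, (hfder x hx).deriv]
      ring
    | succ n IH =>
      intro x hx
      rw [iteratedDeriv_succ]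
      have hev : iteratedDeriv (n+1) f =ᶠ[nhds x]
          (fun y => (-1:ℝ)^(n+1) * (c^2 * Ssum α β n y)) :=
        Filter.eventuallyEq_of_mem (hUopen.mem_nhds hx) IH
      rw [hev.deriv_eq]
      have hd : HasDerivAt (fun y => (-1:ℝ)^(n+1) * (c^2 * Ssum α β n y))
          ((-1:ℝ)^(n+1) * (c^2 * (-(Ssum α β (n+1) x)))) x :=
        ((hasDerivAt_Ssum hβα hx n).const_mul (c^2)).const_mul ((-1:ℝ)^(n+1))
      rw [hd.deriv]
      ring
  have hfsmooth : ContDiffOn ℝ (⊤ : ℕ∞) f U := by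
    intro x hx
    apply ContDiffAt.contDiffWithinAt
    have hQx : (x^2 + 2*k*x + kst^2) ≠ 0 := (hQpos x hx).ne'
    have hQcd : ContDiffAt ℝ (⊤ : ℕ∞) (fun s : ℝ => s^2 + 2*k*s + kst^2) x := by
      apply ContDiff.contDiffAt
      fun_prop
    exact ((contDiff_id.add contDiff_const).contDiffAt).mul (hQcd.rpow_const_of_ne hQx)
  have hder_eq : Set.EqOn (deriv u) f U := fun x hx => (hderivu x hx).deriv
  have hder_smooth : ContDiffOn ℝ (⊤ : ℕ∞) (fun s => deriv u s) U := hfsmooth.congr hder_eq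
  refine ⟨?_, ⟨?_, ?_⟩, ?_⟩
  · intro s hs
    have := (hderivu s (hsub hs)).deriv
    rw [this, hf_def]
  · exact hder_smooth.mono hsub
  · intro n s hs
    have hW := iteratedDerivWithin_Ici_eq hUopen hsub hder_smooth n s hs
    have hEqn := hder_eq.iteratedDeriv_of_isOpen hUopen n (hsub hs)
    rw [hW]
    show 0 ≤ (-1:ℝ)^n * iteratedDeriv n (deriv u) s
    rw [hEqn]
    cases n with
    | zero =>
      simp only [pow_zero, one_mul, iteratedDeriv_zero, hf_def]
      have hQx : 0 < s^2 + 2*k*s + kst^2 := hQpos s (hsub hs)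
      have hs0 : (0:ℝ) ≤ s := hs
      positivity
    | succ m =>
      rw [hfiter m (hsub hs)]
      have hone : ((-1:ℝ))^(m+1) * ((-1:ℝ))^(m+1) = 1 := by
        rw [← mul_pow]; norm_num
      have hpos : 0 < c^2 * Ssum α β m s :=
        mul_pos (by positivity) (Ssum_pos hβα (hsub hs) m)
      calc (0:ℝ) ≤ c^2 * Ssum α β m s := hpos.le
        _ = (-1:ℝ)^(m+1) * ((-1:ℝ)^(m+1) * (c^2 * Ssum α β m s)) := by
            rw [← mul_assoc, hone, one_mul]
  · intro n hn s hs
    obtain ⟨m, rfl⟩ : ∃ m, n = m + 1 := ⟨n - 1, by omega⟩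
    have hsU : s ∈ U := hsub hs.le
    rw [iteratedDeriv_succ']
    rw [hder_eq.iteratedDeriv_of_isOpen hUopen m hsU]
    cases m with
    | zero =>
      simp only [iteratedDeriv_zero, hf_def]
      have hQx : 0 < s^2 + 2*k*s + kst^2 := hQpos s hsU
      have h1 : (0:ℝ) < s + k := by linarith
      have : (0:ℝ) < (s + k) * (s^2 + 2*k*s + kst^2) ^ (-(1:ℝ)/2) :=
        mul_pos h1 (Real.rpow_pos_of_pos hQx _)
      simpa using this
    | succ j =>
      rw [hfiter j hsU]
      have hone : ((-1:ℝ))^(j + 1 + 1 + 1) * ((-1:ℝ))^(j+1) = 1 := by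
        rw [← pow_add]
        exact Even.neg_one_pow ⟨j + 2, by ring⟩
      have hpos : 0 < c^2 * Ssum α β j s :=
        mul_pos (by positivity) (Ssum_pos hβα hsU j)
      calc (0:ℝ) < c^2 * Ssum α β j s := hpos
        _ = (-1:ℝ)^(j+1+1+1) * ((-1:ℝ)^(j+1) * (c^2 * Ssum α β j s)) := by
            rw [← mul_assoc, hone, one_mul]
end

section
/- Let τ be a nonnegative random variable with E[τ²] < ∞ and Var(τ) > 0, and suppose a nonnegative random variable ξ satisfies E[exp(−sξ)] = f̂(ks + s²/2) for all s ≥ 0, where f̂ is the Laplace transform of τ and k > 0. Then E[ξ] = k·E[τ], E[ξ²] = k²·E[τ²] − E[τ], and consequently k ≥ √(E[τ]) / σ(τ), where σ(τ) = √Var(τ). In particular, no such ξ exists when k < √(E[τ])/σ(τ). -/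
/-! For a nonnegative random variable `X` with Laplace transform `L(s) = E[exp(-sX)]`, the
difference quotients `(1 - L(s))/s` and `(L(s) - 1 + s E X)/s²` converge as `s → 0+` to `E X`
and `E X²/2`; conversely, by Fatou's lemma, a finite limit forces the moment to be finite.
Substituting `s ↦ ks + s²/2` in the functional equation turns these limits for `τ` into the
ones for `ξ`, which gives `E ξ = k E τ` and `E ξ² = k² E τ² - E τ`. Finally
`0 ≤ Var ξ = k² Var τ - E τ`. -/

open MeasureTheory ProbabilityTheory Real
open Filter Topology

lemma one_sub_mul_le_exp_neg_mul (s x : ℝ) : 1 - s * x ≤ exp (-s * x) := by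
  rw [neg_mul]; exact one_sub_le_exp_neg _

-- `(1 - u + u²/2)(1 + u + u²/2) = 1 + u⁴/4 ≥ 1` and `1 + u + u²/2 ≤ exp u`.
lemma exp_neg_le_one_sub_add_sq_div_two {u : ℝ} (hu : 0 ≤ u) : exp (-u) ≤ 1 - u + u ^ 2 / 2 := by
  have hexp := quadratic_le_exp_of_nonneg hu
  have hinv : exp (-u) * exp u = 1 := by rw [← exp_add, neg_add_cancel, exp_zero]
  nlinarith [exp_pos (-u), sq_nonneg (u ^ 2)]

lemma abs_exp_neg_sub_quadratic_le {u : ℝ} (hu : |u| ≤ 1) :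
    |exp (-u) - (1 - u + u ^ 2 / 2)| ≤ |u| ^ 3 := by
  have h := Real.exp_bound (x := -u) (by rwa [abs_neg]) (n := 3) (by norm_num)
  have hsum : ∑ m ∈ Finset.range 3, (-u) ^ m / m.factorial = 1 - u + u ^ 2 / 2 := by
    simp [Finset.sum_range_succ, Nat.factorial]; ring
  rw [hsum, abs_neg] at h
  refine h.trans ?_
  norm_num [Nat.factorial]
  nlinarith [pow_nonneg (abs_nonneg u) 3]

lemma tendsto_one_sub_exp_neg_mul_div (x : ℝ) :
    Tendsto (fun s => (1 - exp (-s * x)) / s) (𝓝[>] 0) (𝓝 x) := by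
  have h : HasDerivAt (fun s => exp (-s * x)) (-x) 0 := by
    simpa using ((hasDerivAt_neg 0).mul_const x).exp
  simpa [div_eq_inv_mul, mul_sub] using h.tendsto_slope_zero_right.neg

lemma tendsto_exp_neg_mul_sub_div_sq (x : ℝ) :
    Tendsto (fun s => (exp (-s * x) - 1 + s * x) / s ^ 2) (𝓝[>] 0) (𝓝 (x ^ 2 / 2)) := by
  rw [tendsto_iff_norm_sub_tendsto_zero]
  have hsmall : ∀ᶠ s in 𝓝[>] (0 : ℝ), |s * x| ≤ 1 := by
    have h : Tendsto (fun s : ℝ => |s * x|) (𝓝[>] 0) (𝓝 0) :=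
      ((continuous_mul_const x).abs.tendsto' 0 0 (by simp)).mono_left nhdsWithin_le_nhds
    exact h.eventually_le_const zero_lt_one
  have hlim : Tendsto (fun s : ℝ => s * |x| ^ 3) (𝓝[>] 0) (𝓝 0) :=
    ((continuous_mul_const _).tendsto' 0 0 (zero_mul _)).mono_left nhdsWithin_le_nhds
  refine squeeze_zero' (Eventually.of_forall fun _ => norm_nonneg _) ?_ hlim
  filter_upwards [hsmall, self_mem_nhdsWithin] with s hs (hs0 : 0 < s)
  have hrw : (exp (-s * x) - 1 + s * x) / s ^ 2 - x ^ 2 / 2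
      = (exp (-(s * x)) - (1 - s * x + (s * x) ^ 2 / 2)) / s ^ 2 := by
    rw [neg_mul]; field_simp; ring
  calc ‖(exp (-s * x) - 1 + s * x) / s ^ 2 - x ^ 2 / 2‖
      = |exp (-(s * x)) - (1 - s * x + (s * x) ^ 2 / 2)| / s ^ 2 := by
        rw [hrw, Real.norm_eq_abs, abs_div, abs_of_pos (pow_pos hs0 2)]
    _ ≤ |s * x| ^ 3 / s ^ 2 := by gcongr; exact abs_exp_neg_sub_quadratic_le hs
    _ = s * |x| ^ 3 := by rw [abs_mul, abs_of_pos hs0]; field_simp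

section Fatou

variable {Ω : Type*} {mΩ : MeasurableSpace Ω} {μ : Measure Ω}

theorem integrable_of_tendsto_integral_of_nonneg {F : ℕ → Ω → ℝ} {f : Ω → ℝ} {c : ℝ}
    (hF_int : ∀ n, Integrable (F n) μ) (hF_nonneg : ∀ n, 0 ≤ᵐ[μ] F n)
    (hF_lim : ∀ᵐ ω ∂μ, Tendsto (F · ω) atTop (𝓝 (f ω)))
    (h : Tendsto (fun n => ∫ ω, F n ω ∂μ) atTop (𝓝 c)) :
    Integrable f μ := by
  refine ⟨aestronglyMeasurable_of_tendsto_ae _ (fun n => (hF_int n).1) hF_lim, ?_⟩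
  calc ∫⁻ ω, ‖f ω‖ₑ ∂μ = ∫⁻ ω, liminf (fun n => ‖F n ω‖ₑ) atTop ∂μ :=
        lintegral_congr_ae (by filter_upwards [hF_lim] with ω hω using hω.enorm.liminf_eq.symm)
    _ ≤ liminf (fun n => ∫⁻ ω, ‖F n ω‖ₑ ∂μ) atTop :=
        lintegral_liminf_le' fun n => (hF_int n).1.enorm
    _ = liminf (fun n => ENNReal.ofReal (∫ ω, F n ω ∂μ)) atTop := by
        congr! 2 with n
        rw [ofReal_integral_eq_lintegral_ofReal (hF_int n) (hF_nonneg n)]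
        refine lintegral_congr_ae ?_
        filter_upwards [hF_nonneg n] with ω hω using Real.enorm_of_nonneg hω
    _ = ENNReal.ofReal c := (ENNReal.tendsto_ofReal h).liminf_eq
    _ < ⊤ := ENNReal.ofReal_lt_top

theorem tendsto_integral_iff_of_nonneg_of_le {ι : Type*} {l : Filter ι} [l.IsCountablyGenerated]
    [l.NeBot] {F : ι → Ω → ℝ} {f : Ω → ℝ} {c : ℝ}
    (hF_int : ∀ᶠ i in l, Integrable (F i) μ) (hF_nonneg : ∀ᶠ i in l, 0 ≤ᵐ[μ] F i)
    (hF_le : ∀ᶠ i in l, F i ≤ᵐ[μ] f) (hF_lim : ∀ᵐ ω ∂μ, Tendsto (F · ω) l (𝓝 (f ω))) :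
    Tendsto (fun i => ∫ ω, F i ω ∂μ) l (𝓝 c) ↔ Integrable f μ ∧ ∫ ω, f ω ∂μ = c := by
  have hF_norm : ∀ᶠ i in l, ∀ᵐ ω ∂μ, ‖F i ω‖ ≤ f ω := by
    filter_upwards [hF_nonneg, hF_le] with i h0 hle
    filter_upwards [h0, hle] with ω h0 hle
    rwa [Real.norm_of_nonneg h0]
  have hDCT (hf : Integrable f μ) : Tendsto (fun i => ∫ ω, F i ω ∂μ) l (𝓝 (∫ ω, f ω ∂μ)) :=
    tendsto_integral_filter_of_dominated_convergence f (hF_int.mono fun i hi => hi.1) hF_norm hf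
      hF_lim
  refine ⟨fun h => ?_, fun ⟨hf, hc⟩ => hc ▸ hDCT hf⟩
  obtain ⟨x, hx⟩ := l.exists_seq_tendsto
  obtain ⟨N, hN⟩ := eventually_atTop.1 (hx.eventually (hF_int.and hF_nonneg))
  have hf : Integrable f μ :=
    integrable_of_tendsto_integral_of_nonneg (F := fun n => F (x (n + N)))
      (fun n => (hN _ (by omega)).1) (fun n => (hN _ (by omega)).2)
      (by filter_upwards [hF_lim] with ω hω using (hω.comp hx).comp (tendsto_add_atTop_nat N))
      ((h.comp hx).comp (tendsto_add_atTop_nat N))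
  exact ⟨hf, tendsto_nhds_unique (hDCT hf) h⟩

end Fatou

section LaplaceTransform

variable {Ω : Type*} {mΩ : MeasurableSpace Ω} {μ : Measure Ω} [IsProbabilityMeasure μ]
  {X : Ω → ℝ}

lemma exp_neg_mul_le_one (hX : 0 ≤ X) {s : ℝ} (hs : 0 ≤ s) (ω : Ω) : exp (-s * X ω) ≤ 1 :=
  exp_le_one_iff.2 (by rw [neg_mul]; exact neg_nonpos.2 (mul_nonneg hs (hX ω)))

lemma integrable_exp_neg_mul (hXm : AEMeasurable X μ) (hX : 0 ≤ X) {s : ℝ} (hs : 0 ≤ s) :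
    Integrable (fun ω => exp (-s * X ω)) μ :=
  .of_mem_Icc 0 1 (measurable_exp.comp_aemeasurable (hXm.const_mul _)) <|
    ae_of_all _ fun ω => ⟨(exp_pos _).le, exp_neg_mul_le_one hX hs ω⟩

theorem tendsto_one_sub_mgf_neg_div_iff (hXm : AEMeasurable X μ) (hX : 0 ≤ X) {c : ℝ} :
    Tendsto (fun s => (1 - mgf X μ (-s)) / s) (𝓝[>] 0) (𝓝 c) ↔
      Integrable X μ ∧ ∫ ω, X ω ∂μ = c := by
  have hint : ∀ᶠ s in 𝓝[>] (0 : ℝ), Integrable (fun ω => exp (-s * X ω)) μ :=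
    eventually_mem_nhdsWithin.mono fun s hs => integrable_exp_neg_mul hXm hX (le_of_lt hs)
  have hmgf : (fun s => (1 - mgf X μ (-s)) / s)
      =ᶠ[𝓝[>] 0] fun s => ∫ ω, (1 - exp (-s * X ω)) / s ∂μ := by
    filter_upwards [hint] with s hs
    rw [integral_div, integral_sub (integrable_const 1) hs, integral_const]
    simp [mgf]
  rw [tendsto_congr' hmgf]
  refine tendsto_integral_iff_of_nonneg_of_le ?_ ?_ ?_
    (ae_of_all _ fun ω => tendsto_one_sub_exp_neg_mul_div (X ω))
  · filter_upwards [hint] with s hs using ((integrable_const 1).sub hs).div_const s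
  · filter_upwards [self_mem_nhdsWithin] with s (hs : 0 < s)
    exact ae_of_all _ fun ω => div_nonneg (by linarith [exp_neg_mul_le_one hX hs.le ω]) hs.le
  · filter_upwards [self_mem_nhdsWithin] with s (hs : 0 < s)
    refine ae_of_all _ fun ω => (div_le_iff₀ hs).2 ?_
    linarith [one_sub_mul_le_exp_neg_mul s (X ω)]

theorem tendsto_mgf_neg_sub_div_sq_iff (hX : 0 ≤ X) (hXi : Integrable X μ) {c : ℝ} :
    Tendsto (fun s => (mgf X μ (-s) - 1 + s * ∫ ω, X ω ∂μ) / s ^ 2) (𝓝[>] 0) (𝓝 (c / 2)) ↔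
      Integrable (fun ω => X ω ^ 2) μ ∧ ∫ ω, X ω ^ 2 ∂μ = c := by
  have hint : ∀ᶠ s in 𝓝[>] (0 : ℝ), Integrable (fun ω => exp (-s * X ω) - 1 + s * X ω) μ :=
    eventually_mem_nhdsWithin.mono fun s hs =>
      ((integrable_exp_neg_mul hXi.1.aemeasurable hX (le_of_lt hs)).sub
        (integrable_const 1)).add (hXi.const_mul s)
  have hmgf : (fun s => (mgf X μ (-s) - 1 + s * ∫ ω, X ω ∂μ) / s ^ 2)
      =ᶠ[𝓝[>] 0] fun s => ∫ ω, (exp (-s * X ω) - 1 + s * X ω) / s ^ 2 ∂μ := by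
    filter_upwards [self_mem_nhdsWithin] with s (hs : 0 < s)
    have hexp := integrable_exp_neg_mul hXi.1.aemeasurable hX hs.le
    rw [integral_div, integral_add (f := fun ω => exp (-s * X ω) - 1)
        (hexp.sub (integrable_const 1)) (hXi.const_mul s),
      integral_sub hexp (integrable_const 1), integral_const, integral_const_mul]
    simp [mgf]
  rw [tendsto_congr' hmgf, tendsto_integral_iff_of_nonneg_of_le (f := fun ω => X ω ^ 2 / 2)]
  · refine ⟨fun ⟨hi, hc⟩ => ⟨(hi.const_mul 2).congr (ae_of_all _ fun ω => by ring), ?_⟩,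
      fun ⟨hi, hc⟩ => ⟨hi.div_const 2, by rw [integral_div, hc]⟩⟩
    rw [integral_div] at hc
    linarith
  · filter_upwards [hint] with s hs using hs.div_const _
  · filter_upwards [self_mem_nhdsWithin] with s (hs : 0 < s)
    exact ae_of_all _ fun ω =>
      div_nonneg (by linarith [one_sub_mul_le_exp_neg_mul s (X ω)]) (sq_nonneg s)
  · filter_upwards [self_mem_nhdsWithin] with s (hs : 0 < s)
    refine ae_of_all _ fun ω => (div_le_iff₀ (pow_pos hs 2)).2 ?_
    have := exp_neg_le_one_sub_add_sq_div_two (mul_nonneg hs.le (hX ω))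
    rw [neg_mul]
    nlinarith
  · exact ae_of_all _ fun ω => tendsto_exp_neg_mul_sub_div_sq (X ω)

end LaplaceTransform

lemma tendsto_mul_add_sq_div_two_nhdsGT {k : ℝ} (hk : 0 ≤ k) :
    Tendsto (fun s : ℝ => k * s + s ^ 2 / 2) (𝓝[>] 0) (𝓝[>] 0) := by
  refine tendsto_nhdsWithin_iff.2 ⟨?_, ?_⟩
  · exact ((by fun_prop : Continuous fun s : ℝ => k * s + s ^ 2 / 2).tendsto' 0 0
      (by simp)).mono_left nhdsWithin_le_nhds
  · filter_upwards [self_mem_nhdsWithin] with s (hs : 0 < s)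
    exact (by positivity : 0 < k * s + s ^ 2 / 2)

lemma tendsto_mul_add_sq_div_two_div (k : ℝ) :
    Tendsto (fun s : ℝ => (k * s + s ^ 2 / 2) / s) (𝓝[>] 0) (𝓝 k) := by
  refine ((by fun_prop : Continuous fun s : ℝ => k + s / 2).tendsto' 0 k (by simp)).mono_left
    nhdsWithin_le_nhds |>.congr' ?_
  filter_upwards [self_mem_nhdsWithin] with s (hs : 0 < s)
  field_simp

section FunctionalEquation

variable {Ω : Type*} {mΩ : MeasurableSpace Ω} {μ : Measure Ω} [IsProbabilityMeasure μ]
  {τ ξ : Ω → ℝ} {k : ℝ}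

theorem integrable_and_integral_eq_mul_of_mgf_neg_eq (hk : 0 ≤ k) (hτm : AEMeasurable τ μ)
    (hτ : 0 ≤ τ) (hτi : Integrable τ μ) (hξm : AEMeasurable ξ μ) (hξ : 0 ≤ ξ)
    (hsol : ∀ s : ℝ, 0 ≤ s → mgf ξ μ (-s) = mgf τ μ (-(k * s + s ^ 2 / 2))) :
    Integrable ξ μ ∧ ∫ ω, ξ ω ∂μ = k * ∫ ω, τ ω ∂μ := by
  refine (tendsto_one_sub_mgf_neg_div_iff hξm hξ).1 ?_
  have h := (((tendsto_one_sub_mgf_neg_div_iff hτm hτ).2 ⟨hτi, rfl⟩).comp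
    (tendsto_mul_add_sq_div_two_nhdsGT hk)).mul (tendsto_mul_add_sq_div_two_div k)
  rw [mul_comm]
  refine h.congr' ?_
  filter_upwards [self_mem_nhdsWithin] with s (hs : 0 < s)
  have : k * s + s ^ 2 / 2 ≠ 0 := by positivity
  simp only [Function.comp, hsol s hs.le]
  field_simp

theorem integrable_sq_and_integral_sq_eq_of_mgf_neg_eq (hk : 0 ≤ k) (hτ : 0 ≤ τ)
    (hτi : Integrable τ μ) (hτi2 : Integrable (fun ω => τ ω ^ 2) μ) (hξ : 0 ≤ ξ)
    (hξi : Integrable ξ μ) (hξ_mean : ∫ ω, ξ ω ∂μ = k * ∫ ω, τ ω ∂μ)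
    (hsol : ∀ s : ℝ, 0 ≤ s → mgf ξ μ (-s) = mgf τ μ (-(k * s + s ^ 2 / 2))) :
    Integrable (fun ω => ξ ω ^ 2) μ ∧
      ∫ ω, ξ ω ^ 2 ∂μ = k ^ 2 * (∫ ω, τ ω ^ 2 ∂μ) - ∫ ω, τ ω ∂μ := by
  refine (tendsto_mgf_neg_sub_div_sq_iff hξ hξi).1 ?_
  have h := ((((tendsto_mgf_neg_sub_div_sq_iff hτ hτi).2 ⟨hτi2, rfl⟩).comp
    (tendsto_mul_add_sq_div_two_nhdsGT hk)).mul
    ((tendsto_mul_add_sq_div_two_div k).pow 2)).sub_const ((∫ ω, τ ω ∂μ) / 2)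
  rw [show (k ^ 2 * (∫ ω, τ ω ^ 2 ∂μ) - ∫ ω, τ ω ∂μ) / 2
    = (∫ ω, τ ω ^ 2 ∂μ) / 2 * k ^ 2 - (∫ ω, τ ω ∂μ) / 2 by ring]
  refine h.congr' ?_
  filter_upwards [self_mem_nhdsWithin] with s (hs : 0 < s)
  have : k * s + s ^ 2 / 2 ≠ 0 := by positivity
  simp only [Function.comp, hsol s hs.le, hξ_mean]
  field_simp
  ring

end FunctionalEquation

lemma sqrt_div_sqrt_le_of_le_sq_mul {a v k : ℝ} (hk : 0 ≤ k) (h : a ≤ k ^ 2 * v) :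
    √a / √v ≤ k := by
  rcases le_or_gt v 0 with hv | hv
  · simp [Real.sqrt_eq_zero'.2 hv, hk]
  rw [div_le_iff₀ (Real.sqrt_pos.2 hv), ← Real.sqrt_sq hk, ← Real.sqrt_mul (sq_nonneg k)]
  exact Real.sqrt_le_sqrt h

theorem moment_necessary_condition_general
    {Ω : Type*} [MeasureSpace Ω] [IsProbabilityMeasure (volume : Measure Ω)]
    (τ ξ : Ω → ℝ) (hτm : Measurable τ) (hξm : Measurable ξ)
    (hτ : ∀ ω, 0 ≤ τ ω) (hξ : ∀ ω, 0 ≤ ξ ω)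
    (hτ2 : Integrable (fun ω => (τ ω) ^ 2))
    (k : ℝ) (hk : 0 < k)
    (hsol : ∀ s : ℝ, 0 ≤ s →
      (∫ ω, Real.exp (-s * ξ ω)) = ∫ ω, Real.exp (-(k * s + s ^ 2 / 2) * τ ω)) :
    (∫ ω, ξ ω) = k * ∫ ω, τ ω ∧
      (∫ ω, (ξ ω) ^ 2) = k ^ 2 * (∫ ω, (τ ω) ^ 2) - ∫ ω, τ ω ∧
      Real.sqrt (∫ ω, τ ω) / Real.sqrt (variance τ volume) ≤ k := by
  have hτ_L2 : MemLp τ 2 := (memLp_two_iff_integrable_sq hτm.aestronglyMeasurable).2 hτ2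
  have hτ1 : Integrable τ := hτ_L2.integrable one_le_two
  obtain ⟨hξ1, hξ_mean⟩ := integrable_and_integral_eq_mul_of_mgf_neg_eq hk.le hτm.aemeasurable hτ
    hτ1 hξm.aemeasurable hξ hsol
  obtain ⟨hξ2, hξ_sq⟩ := integrable_sq_and_integral_sq_eq_of_mgf_neg_eq hk.le hτ hτ1 hτ2 hξ hξ1
    hξ_mean hsol
  refine ⟨hξ_mean, hξ_sq, sqrt_div_sqrt_le_of_le_sq_mul hk.le ?_⟩
  have hvar_ξ := variance_nonneg ξ volume
  rw [variance_eq_sub ((memLp_two_iff_integrable_sq hξm.aestronglyMeasurable).2 hξ2)] at hvar_ξ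
  rw [variance_eq_sub hτ_L2]
  simp only [Pi.pow_apply] at hvar_ξ ⊢
  rw [hξ_sq, hξ_mean] at hvar_ξ
  linarith

/-- Necessary condition for existence (Proposition 2): if `ξ ≥ 0` solves
`E[e^{−sξ}] = E[e^{−(ks+s²/2)τ}]` for a nonnegative square-integrable `τ` with
positive variance and `k > 0`, then `E[ξ] = k·E[τ]`, `E[ξ²] = k²·E[τ²] − E[τ]`,
and consequently `k ≥ √(E[τ])/σ(τ)`; in particular no such `ξ` exists when
`k < √(E[τ])/σ(τ)`. -/
theorem moment_necessary_condition
    {Ω : Type*} [MeasureSpace Ω] [IsProbabilityMeasure (volume : Measure Ω)]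
    (τ ξ : Ω → ℝ) (hτm : Measurable τ) (hξm : Measurable ξ)
    (hτ : ∀ ω, 0 ≤ τ ω) (hξ : ∀ ω, 0 ≤ ξ ω)
    (hτ2 : Integrable (fun ω => (τ ω) ^ 2))
    (hvar : 0 < variance τ volume)
    (k : ℝ) (hk : 0 < k)
    (hsol : ∀ s : ℝ, 0 ≤ s →
      (∫ ω, Real.exp (-s * ξ ω)) = ∫ ω, Real.exp (-(k * s + s ^ 2 / 2) * τ ω)) :
    (∫ ω, ξ ω) = k * ∫ ω, τ ω ∧
      (∫ ω, (ξ ω) ^ 2) = k ^ 2 * (∫ ω, (τ ω) ^ 2) - ∫ ω, τ ω ∧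
      Real.sqrt (∫ ω, τ ω) / Real.sqrt (variance τ volume) ≤ k :=
  moment_necessary_condition_general τ ξ hτm hξm hτ hξ hτ2 k hk hsol
end

section
/- Let τ have the exponential distribution with rate λ > 0 and let k_* = √(2λ). Then the solution ξ of ĝ(s) = f̂(k_*s + s²/2), where f̂(s) = λ/(λ+s), has Laplace transform ĝ(s) = (k_*/(k_* + s))², i.e., ξ is Erlang distributed of order 2 with rate k_* = √(2λ). -/
open MeasureTheory ProbabilityTheory Real

/-!
Since `k_*² = 2λ`, the denominator `λ + k_* s + s²/2` equals `(k_* + s)² / 2`, so the Laplace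
transform of `ξ` is `(k_*/(k_* + s))²`, which is also the Laplace transform of `Gamma(2, k_*)`.
The law of `ξ` is then identified by uniqueness of Laplace transforms: pushing a measure on
`[0, ∞)` forward along `x ↦ exp (-x)` turns its Laplace transform at `s = n` into the `n`-th
moment of a measure on `[0, 1]`, and by Weierstrass approximation a measure on a compact
interval is determined by its moments.
-/

lemma dist_integral_le_of_ae_mem {α E : Type*} [MeasurableSpace α] [NormedAddCommGroup E]
    [NormedSpace ℝ E] {μ : Measure α} [IsFiniteMeasure μ] {s : Set α} (hμ : ∀ᵐ x ∂μ, x ∈ s)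
    {f g : α → E} (hf : Integrable f μ) (hg : Integrable g μ) {ε : ℝ}
    (hfg : ∀ x ∈ s, dist (f x) (g x) ≤ ε) :
    dist (∫ x, f x ∂μ) (∫ x, g x ∂μ) ≤ ε * μ.real Set.univ := by
  rw [dist_eq_norm, ← integral_sub hf hg]
  refine norm_integral_le_of_norm_le_const ?_
  filter_upwards [hμ] with x hx
  exact (dist_eq_norm _ _).symm.trans_le (hfg x hx)

section MomentDeterminacy

variable {μ ν : Measure ℝ} [IsFiniteMeasure μ] [IsFiniteMeasure ν] {a b : ℝ}

lemma integrable_of_ae_mem_Icc (hμ : ∀ᵐ x ∂μ, x ∈ Set.Icc a b) {f : ℝ → ℝ}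
    (hf : Continuous f) : Integrable f μ := by
  rw [← Measure.restrict_eq_self_of_ae_mem hμ]
  exact hf.integrableOn_Icc

lemma integral_eval_eq_of_moments_eq (hμ : ∀ᵐ x ∂μ, x ∈ Set.Icc a b)
    (hν : ∀ᵐ x ∂ν, x ∈ Set.Icc a b) (hmom : ∀ n : ℕ, ∫ x, x ^ n ∂μ = ∫ x, x ^ n ∂ν)
    (p : Polynomial ℝ) : ∫ x, p.eval x ∂μ = ∫ x, p.eval x ∂ν := by
  simp_rw [Polynomial.eval_eq_sum_range]
  rw [integral_finsetSum _ fun i _ => integrable_of_ae_mem_Icc hμ (by fun_prop),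
    integral_finsetSum _ fun i _ => integrable_of_ae_mem_Icc hν (by fun_prop)]
  simp_rw [integral_const_mul, hmom]

theorem MeasureTheory.Measure.ext_of_moments_eq_of_ae_mem_Icc
    (hμ : ∀ᵐ x ∂μ, x ∈ Set.Icc a b) (hν : ∀ᵐ x ∂ν, x ∈ Set.Icc a b)
    (hmom : ∀ n : ℕ, ∫ x, x ^ n ∂μ = ∫ x, x ^ n ∂ν) :
    μ = ν := by
  refine ext_of_forall_integral_eq_of_IsFiniteMeasure fun f => eq_of_forall_dist_le fun ε hε => ?_
  set C := μ.real Set.univ + ν.real Set.univ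
  have hδ : 0 < ε / (C + 1) := by positivity
  obtain ⟨p, hp⟩ :=
    exists_polynomial_near_of_continuousOn a b f f.continuous.continuousOn _ hδ
  have hfp : ∀ x ∈ Set.Icc a b, dist (f x) (p.eval x) ≤ ε / (C + 1) := fun x hx =>
    (dist_comm _ _).trans_le (hp x hx).le
  have hp_int : ∀ {ρ : Measure ℝ} [IsFiniteMeasure ρ], (∀ᵐ x ∂ρ, x ∈ Set.Icc a b) →
      Integrable (fun x => p.eval x) ρ := fun hρ => integrable_of_ae_mem_Icc hρ p.continuous
  calc dist (∫ x, f x ∂μ) (∫ x, f x ∂ν)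
      ≤ dist (∫ x, f x ∂μ) (∫ x, p.eval x ∂μ) + dist (∫ x, f x ∂ν) (∫ x, p.eval x ∂ν) := by
        rw [integral_eval_eq_of_moments_eq hμ hν hmom p, dist_comm (∫ x, f x ∂ν)]
        exact dist_triangle _ _ _
    _ ≤ ε / (C + 1) * μ.real Set.univ + ε / (C + 1) * ν.real Set.univ :=
        add_le_add (dist_integral_le_of_ae_mem hμ (f.integrable μ) (hp_int hμ) hfp)
          (dist_integral_le_of_ae_mem hν (f.integrable ν) (hp_int hν) hfp)
    _ = ε * (C / (C + 1)) := by ring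
    _ ≤ ε := mul_le_of_le_one_right hε.le ((div_le_one (by positivity)).2 (by linarith))

end MomentDeterminacy

lemma ae_mem_Icc_map_exp_neg {μ : Measure ℝ} (hμ : ∀ᵐ x ∂μ, 0 ≤ x) :
    ∀ᵐ y ∂μ.map (fun x => exp (-x)), y ∈ Set.Icc 0 1 := by
  refine (ae_map_iff (by fun_prop) measurableSet_Icc).2 ?_
  filter_upwards [hμ] with x hx
  exact ⟨(exp_pos _).le, exp_le_one_iff.2 (neg_nonpos.2 hx)⟩

lemma integral_pow_map_exp_neg (μ : Measure ℝ) (n : ℕ) :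
    ∫ y, y ^ n ∂μ.map (fun x => exp (-x)) = ∫ x, exp (-n * x) ∂μ := by
  rw [integral_map (by fun_prop) (by fun_prop)]
  simp_rw [← exp_nat_mul, neg_mul, mul_neg]

lemma map_log_map_exp_neg (μ : Measure ℝ) :
    (μ.map (fun x => exp (-x))).map (fun y => -log y) = μ := by
  rw [Measure.map_map (by fun_prop) (by fun_prop)]
  simp [Function.comp_def]

theorem MeasureTheory.Measure.ext_of_laplace_eq {μ ν : Measure ℝ} [IsFiniteMeasure μ]
    [IsFiniteMeasure ν]     (hμ : ∀ᵐ x ∂μ, 0 ≤ x) (hν : ∀ᵐ x ∂ν, 0 ≤ x)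
    (h : ∀ s : ℝ, 0 ≤ s → ∫ x, exp (-s * x) ∂μ = ∫ x, exp (-s * x) ∂ν) : μ = ν := by
  have hmap : μ.map (fun x => exp (-x)) = ν.map (fun x => exp (-x)) :=
    Measure.ext_of_moments_eq_of_ae_mem_Icc (ae_mem_Icc_map_exp_neg hμ)
      (ae_mem_Icc_map_exp_neg hν) fun n => by
        rw [integral_pow_map_exp_neg, integral_pow_map_exp_neg, h n n.cast_nonneg]
  rw [← map_log_map_exp_neg μ, hmap, map_log_map_exp_neg]

lemma gammaPDFReal_mul_exp_neg_mul {a r s : ℝ} (hr : 0 < r) (hrs : 0 < r + s) (x : ℝ) :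
    gammaPDFReal a r x * exp (-s * x) = (r / (r + s)) ^ a * gammaPDFReal a (r + s) x := by
  unfold gammaPDFReal
  split_ifs
  · rw [div_rpow hr.le hrs.le, mul_assoc _ (exp _), ← exp_add]
    field_simp
    ring_nf
  · simp

lemma integral_exp_neg_mul_gammaMeasure {a r s : ℝ} (ha : 0 < a) (hr : 0 < r)
    (hrs : 0 < r + s) :
    ∫ x, exp (-s * x) ∂gammaMeasure a r = (r / (r + s)) ^ a := by
  have hpdf : ∀ r, Measurable (gammaPDF a r) := fun r =>
    (measurable_gammaPDFReal a r).ennreal_ofReal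
  rw [integral_eq_lintegral_of_nonneg_ae (ae_of_all _ fun x => (exp_pos _).le) (by fun_prop),
    gammaMeasure, lintegral_withDensity_eq_lintegral_mul _ (hpdf r) (by fun_prop)]
  have hpt : ∀ x, gammaPDF a r x * ENNReal.ofReal (exp (-s * x)) =
      ENNReal.ofReal ((r / (r + s)) ^ a) * gammaPDF a (r + s) x := fun x => by
    rw [gammaPDF, gammaPDF, ← ENNReal.ofReal_mul (gammaPDFReal_nonneg ha hr x),
      ← ENNReal.ofReal_mul (by positivity), gammaPDFReal_mul_exp_neg_mul hr hrs]
  simp only [Pi.mul_apply, hpt]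
  rw [lintegral_const_mul _ (hpdf _), lintegral_gammaPDF_eq_one ha hrs, mul_one,
    ENNReal.toReal_ofReal (by positivity)]

lemma div_add_mul_add_sq_div_two {lam k s : ℝ} (hk : k ^ 2 = 2 * lam) :
    lam / (lam + (k * s + s ^ 2 / 2)) = (k / (k + s)) ^ 2 := by
  rw [show lam + (k * s + s ^ 2 / 2) = (k + s) ^ 2 / 2 by linear_combination -hk / 2, div_pow, hk,
    div_div_eq_mul_div, mul_comm]

lemma ae_nonneg_gammaMeasure (a r : ℝ) : ∀ᵐ x ∂gammaMeasure a r, 0 ≤ x := by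
  simp only [ae_iff, not_le]
  exact (withDensity_apply _ measurableSet_Iio).trans (lintegral_gammaPDF_of_nonpos le_rfl)

/-- Minimal solution for the exponential target: if `τ ~ Exp(λ)` (Laplace transform
`f̂(s) = λ/(λ+s)`) and `k_* = √(2λ)`, then the solution `ξ` of
`ĝ(s) = f̂(k_*s + s²/2)` has Laplace transform `(k_*/(k_*+s))²`, i.e. `ξ` is
Erlang of order 2 (Gamma(2, k_*)) with rate `k_* = √(2λ)`. -/
theorem minimal_solution_exponential
    {Ω : Type*} [MeasureSpace Ω] [IsProbabilityMeasure (volume : Measure Ω)]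
    (lam : ℝ) (hlam : 0 < lam) (kst : ℝ) (hkst : kst = Real.sqrt (2 * lam))
    (ξ : Ω → ℝ) (hξm : Measurable ξ) (hξ : ∀ ω, 0 ≤ ξ ω)
    (hsol : ∀ s : ℝ, 0 ≤ s →
      (∫ ω, Real.exp (-s * ξ ω)) = lam / (lam + (kst * s + s ^ 2 / 2))) :
    (∀ s : ℝ, 0 ≤ s →
        (∫ ω, Real.exp (-s * ξ ω)) = (kst / (kst + s)) ^ 2) ∧
      Measure.map ξ volume = gammaMeasure 2 kst := by
  have hk : 0 < kst := hkst ▸ sqrt_pos.2 (by positivity)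
  have hk2 : kst ^ 2 = 2 * lam := by rw [hkst, sq_sqrt (by positivity)]
  have hlap : ∀ s : ℝ, 0 ≤ s → ∫ ω, exp (-s * ξ ω) = (kst / (kst + s)) ^ 2 := fun s hs =>
    (hsol s hs).trans (div_add_mul_add_sq_div_two hk2)
  refine ⟨hlap, ?_⟩
  have := isProbabilityMeasure_gammaMeasure two_pos hk
  refine Measure.ext_of_laplace_eq ((ae_map_iff hξm.aemeasurable measurableSet_Ici).2
    (ae_of_all _ hξ)) (ae_nonneg_gammaMeasure 2 kst) fun s hs => ?_
  rw [integral_map hξm.aemeasurable (by fun_prop), hlap s hs,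
    integral_exp_neg_mul_gammaMeasure two_pos hk (by positivity)]
  norm_cast
end

section
/- For any γ > 0 and λ > 0, the function s ↦ (2λ/(s² + 2ks + 2λ))^γ on [0,∞) is the Laplace transform of a probability distribution on [0,∞) if k ≥ √(2λ); moreover, for γ = 1 and 0 < k < √(2λ), the function 2λ/(s² + 2ks + 2λ) is not completely monotone (hence is not such a Laplace transform). -/
open Set MeasureTheory Real

section Helpers
open ProbabilityTheory Nat

lemma gamma_laplace {g r s : ℝ} (hg : 0 < g) (hr : 0 < r) (hs : 0 ≤ s) :
    ∫ x, Real.exp (-s * x) ∂(gammaMeasure g r) = (r / (s + r)) ^ g := by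
  have hsr : 0 < s + r := by linarith
  have hC : 0 ≤ (r / (s + r)) ^ g := by positivity
  have key : ∀ x : ℝ, ENNReal.ofReal (Real.exp (-s * x)) * gammaPDF g r x
      = ENNReal.ofReal ((r / (s + r)) ^ g) * gammaPDF g (s + r) x := by
    intro x
    rcases le_or_gt 0 x with hx | hx
    · rw [gammaPDF_of_nonneg hx, gammaPDF_of_nonneg hx,
        ← ENNReal.ofReal_mul (Real.exp_nonneg _), ← ENNReal.ofReal_mul hC]
      congr 1
      have h1 : Real.exp (-s * x) * Real.exp (-(r * x)) = Real.exp (-((s + r) * x)) := by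
        rw [← Real.exp_add]; ring_nf
      have h2 : (r / (s + r)) ^ g * (s + r) ^ g = r ^ g := by
        rw [div_rpow hr.le hsr.le, div_mul_cancel₀]
        exact (Real.rpow_pos_of_pos hsr g).ne'
      calc Real.exp (-s * x) * (r ^ g / Real.Gamma g * x ^ (g - 1) * Real.exp (-(r * x)))
          = (r ^ g / Real.Gamma g * x ^ (g - 1)) * (Real.exp (-s * x) * Real.exp (-(r * x))) := by ring
        _ = (r ^ g / Real.Gamma g * x ^ (g - 1)) * Real.exp (-((s + r) * x)) := by rw [h1]
        _ = (r / (s + r)) ^ g * ((s + r) ^ g / Real.Gamma g * x ^ (g - 1) * Real.exp (-((s + r) * x))) := by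
            rw [← h2]; ring
    · rw [gammaPDF_of_neg hx, gammaPDF_of_neg hx, mul_zero, mul_zero]
  rw [integral_eq_lintegral_of_nonneg_ae (ae_of_all _ fun x => Real.exp_nonneg _)
    (Continuous.aestronglyMeasurable (by continuity))]
  have hm : Measurable fun x : ℝ => ENNReal.ofReal (Real.exp (-s * x)) := by fun_prop
  rw [gammaMeasure, lintegral_withDensity_eq_lintegral_mul _
    (show Measurable (gammaPDF g r) from (measurable_gammaPDFReal g r).ennreal_ofReal)
    hm]
  have : ∀ x, (gammaPDF g r * fun x => ENNReal.ofReal (Real.exp (-s * x))) x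
      = ENNReal.ofReal ((r / (s + r)) ^ g) * gammaPDF g (s + r) x := by
    intro x; rw [Pi.mul_apply, mul_comm]; exact key x
  rw [lintegral_congr this, lintegral_const_mul _ (by
    exact (measurable_gammaPDFReal g (s+r)).ennreal_ofReal),
    lintegral_gammaPDF_eq_one hg hsr, mul_one, ENNReal.toReal_ofReal hC]


lemma step_hasDerivAt (c : ℂ) (hc : c.im ≠ 0) (n : ℕ) (s : ℝ) (A : ℝ) :
    HasDerivAt (fun s : ℝ => A * (-(Complex.I) * ((-1 : ℂ) ^ n * (n ! : ℂ) *
        ((s : ℂ) + c)⁻¹ ^ (n + 1))).re)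
      (A * (-(Complex.I) * ((-1 : ℂ) ^ (n + 1) * ((n + 1)! : ℂ) *
        ((s : ℂ) + c)⁻¹ ^ (n + 2))).re) s := by
  have hw : ((s : ℂ) + c) ≠ 0 := by
    intro h
    have : ((s : ℂ) + c).im = 0 := by rw [h]; simp
    simp [Complex.add_im] at this
    exact hc this
  have h1 : HasDerivAt (fun z : ℂ => (z + c)⁻¹) (-1 / ((s : ℂ) + c) ^ 2) (s : ℂ) := by
    exact ((hasDerivAt_id ((s : ℂ))).add_const c).inv hw
  have h2 : HasDerivAt (fun z : ℂ => ((z + c)⁻¹) ^ (n + 1))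
      ((n + 1 : ℕ) * (((s : ℂ) + c)⁻¹) ^ n * (-1 / ((s : ℂ) + c) ^ 2)) (s : ℂ) := by
    exact h1.pow (n + 1)
  have h3 := ((h2.const_mul ((-1 : ℂ) ^ n * (n ! : ℂ))).const_mul (-(Complex.I)))
  have h4 := h3.real_of_complex.const_mul A
  convert h4 using 2
  · rfl
  · rfl
  have hfac : (((n + 1)! : ℕ) : ℂ) = ((n : ℂ) + 1) * ((n ! : ℕ) : ℂ) := by
    push_cast [Nat.factorial_succ]; ring
  rw [hfac]
  congr 1; push_cast; simp only [div_eq_mul_inv, ← inv_pow]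
  ring


lemma claimA (c : ℂ) (hc : c.im ≠ 0) (A : ℝ) (F : ℝ → ℝ)
    (hF : F = fun s : ℝ => A * (-(Complex.I) * (((s : ℂ) + c)⁻¹ ^ (0 + 1))).re) (n : ℕ) :
    iteratedDeriv n F = fun s : ℝ => A * (-(Complex.I) * ((-1 : ℂ) ^ n * (Nat.factorial n : ℂ) *
        ((s : ℂ) + c)⁻¹ ^ (n + 1))).re := by
  induction n with
  | zero => simpa [iteratedDeriv_zero] using hF
  | succ n ih =>
    rw [iteratedDeriv_succ, ih]
    funext s
    exact (step_hasDerivAt c hc n s A).deriv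

lemma claimB (c : ℂ) (hc : c.im ≠ 0) (A : ℝ) (F : ℝ → ℝ)
    (hF : F = fun s : ℝ => A * (-(Complex.I) * (((s : ℂ) + c)⁻¹ ^ (0 + 1))).re) (n : ℕ)
    (s : ℝ) (hs : s ∈ Set.Ici (0 : ℝ)) :
    iteratedDerivWithin n F (Set.Ici 0) s = iteratedDeriv n F s := by
  induction n generalizing s with
  | zero => simp [iteratedDerivWithin_zero, iteratedDeriv_zero]
  | succ n ih =>
    rw [iteratedDerivWithin_succ,
      derivWithin_congr (fun y hy => ih y hy) (ih s hs), iteratedDeriv_succ]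
    have hd : HasDerivAt (iteratedDeriv n F)
        (A * (-(Complex.I) * ((-1 : ℂ) ^ (n+1) * (Nat.factorial (n+1) : ℂ) *
        ((s : ℂ) + c)⁻¹ ^ (n + 2))).re) s := by
      rw [claimA c hc A F hF n]
      exact step_hasDerivAt c hc n s A
    exact hd.differentiableAt.derivWithin ((uniqueDiffOn_Ici 0) s hs)


lemma re_helper (r x : ℝ) :
    (-(Complex.I) * (((r : ℝ) : ℂ) * Complex.exp (((x : ℝ) : ℂ) * Complex.I))).re
      = r * Real.sin x := by
  simp [Complex.mul_re, Complex.exp_ofReal_mul_I_re, Complex.exp_ofReal_mul_I_im]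

lemma w_helper (om th kk : ℝ) (hsin : Real.sin th ≠ 0) :
    ((om * Real.cos th / Real.sin th - kk : ℝ) : ℂ) + ((kk : ℂ) - (om : ℂ) * Complex.I)
      = ((om / Real.sin th : ℝ) : ℂ) * Complex.exp (((-th : ℝ) : ℂ) * Complex.I) := by
  apply Complex.ext
  · simp only [Complex.add_re, Complex.ofReal_re, Complex.sub_re, Complex.mul_re,
      Complex.ofReal_im, Complex.I_re, Complex.I_im, Complex.exp_ofReal_mul_I_re,
      Complex.exp_ofReal_mul_I_im, Real.cos_neg, Real.sin_neg]
    field_simp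
    ring
  · simp only [Complex.add_im, Complex.ofReal_im, Complex.sub_im, Complex.mul_im,
      Complex.ofReal_re, Complex.I_re, Complex.I_im, Complex.exp_ofReal_mul_I_re,
      Complex.exp_ofReal_mul_I_im, Real.cos_neg, Real.sin_neg]
    field_simp
    ring


lemma part1 (lam gam : ℝ) (hlam : 0 < lam) (hgam : 0 < gam) (k : ℝ)
    (hk : Real.sqrt (2 * lam) ≤ k) :
    ∃ μ : Measure ℝ, IsProbabilityMeasure μ ∧ μ {x | x < 0} = 0 ∧
      ∀ s : ℝ, 0 ≤ s →
        (∫ x, Real.exp (-s * x) ∂μ)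
          = (2 * lam / (s ^ 2 + 2 * k * s + 2 * lam)) ^ gam := by
  have h2l : 0 < 2 * lam := by linarith
  have hk0 : 0 < k := lt_of_lt_of_le (Real.sqrt_pos.mpr h2l) hk
  have hk2 : 2 * lam ≤ k ^ 2 := by
    nlinarith [Real.sq_sqrt h2l.le, Real.sqrt_nonneg (2 * lam)]
  set d := Real.sqrt (k ^ 2 - 2 * lam) with hd
  have hd0 : 0 ≤ d := Real.sqrt_nonneg _
  have hd2 : d ^ 2 = k ^ 2 - 2 * lam := Real.sq_sqrt (by linarith)
  have hdk : d < k := by nlinarith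
  set a := k + d with ha
  set b := k - d with hb
  have ha0 : 0 < a := by positivity
  have hb0 : 0 < b := by simp only [hb]; linarith
  have hab : a * b = 2 * lam := by simp only [ha, hb]; nlinarith
  have habs : a + b = 2 * k := by simp only [ha, hb]; ring
  have ip1 : IsProbabilityMeasure (gammaMeasure gam a) := isProbabilityMeasure_gammaMeasure hgam ha0
  have ip2 : IsProbabilityMeasure (gammaMeasure gam b) := isProbabilityMeasure_gammaMeasure hgam hb0
  have hmadd : Measurable fun p : ℝ × ℝ => p.1 + p.2 := measurable_fst.add measurable_snd
  refine ⟨Measure.map (fun p : ℝ × ℝ => p.1 + p.2)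
      ((gammaMeasure gam a).prod (gammaMeasure gam b)), ?_, ?_, ?_⟩
  · exact Measure.isProbabilityMeasure_map hmadd.aemeasurable
  · have hIio : {x : ℝ | x < 0} = Iio 0 := rfl
    rw [hIio, Measure.map_apply hmadd measurableSet_Iio]
    have hsub : (fun p : ℝ × ℝ => p.1 + p.2) ⁻¹' Iio 0 ⊆
        (Iio 0 ×ˢ univ) ∪ (univ ×ˢ Iio 0) := by
      rintro ⟨x, y⟩ h
      simp only [mem_preimage, mem_Iio] at h
      by_cases hx : x < 0
      · exact Or.inl ⟨mem_Iio.mpr hx, trivial⟩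
      · exact Or.inr ⟨trivial, mem_Iio.mpr (by push_neg at hx; linarith)⟩
    have hz : ∀ (g r : ℝ), 0 < g → 0 < r → gammaMeasure g r (Iio 0) = 0 := by
      intro g r hg hr
      rw [gammaMeasure, withDensity_apply _ measurableSet_Iio]
      exact lintegral_gammaPDF_of_nonpos le_rfl
    refine measure_mono_null hsub (le_antisymm ?_ (by simp))
    refine le_trans (measure_union_le _ _) ?_
    rw [Measure.prod_prod, Measure.prod_prod, hz gam a hgam ha0, hz gam b hgam hb0,
      zero_mul, mul_zero, add_zero]
  · intro s hs
    have hsa : 0 < s + a := by linarith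
    have hsb : 0 < s + b := by linarith
    rw [integral_map hmadd.aemeasurable (Continuous.aestronglyMeasurable (by continuity))]
    have : ∀ p : ℝ × ℝ, Real.exp (-s * (p.1 + p.2)) = Real.exp (-s * p.1) * Real.exp (-s * p.2) := by
      intro p; rw [← Real.exp_add]; ring_nf
    simp_rw [this]
    rw [integral_prod_mul (fun x => Real.exp (-s * x)) (fun x => Real.exp (-s * x)),
      gamma_laplace hgam ha0 hs, gamma_laplace hgam hb0 hs,
      ← Real.mul_rpow (by positivity) (by positivity)]
    congr 1
    rw [_root_.div_mul_div_comm, hab]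
    congr 1
    nlinarith [hab, habs]


set_option maxHeartbeats 1000000 in
lemma part2 (lam : ℝ) (hlam : 0 < lam) (k : ℝ) (hk0 : 0 < k) (hk : k < Real.sqrt (2 * lam)) :
    ¬ CompletelyMonotone (fun s => 2 * lam / (s ^ 2 + 2 * k * s + 2 * lam)) := by
  have h2l : 0 < 2 * lam := by linarith
  have hk2 : k ^ 2 < 2 * lam := by
    nlinarith [Real.sq_sqrt h2l.le, Real.sqrt_nonneg (2 * lam)]
  set ω := Real.sqrt (2 * lam - k ^ 2) with hωdef
  have hω : 0 < ω := Real.sqrt_pos.mpr (by linarith)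
  have hω2 : ω ^ 2 = 2 * lam - k ^ 2 := Real.sq_sqrt (by linarith)
  set c : ℂ := (k : ℂ) - (ω : ℂ) * Complex.I with hcdef
  have hcim : c.im = -ω := by simp [hcdef]
  have hc : c.im ≠ 0 := by rw [hcim]; exact neg_ne_zero.mpr hω.ne'
  set A := 2 * lam / ω with hAdef
  have hA : 0 < A := by positivity
  set F : ℝ → ℝ := fun s => 2 * lam / (s ^ 2 + 2 * k * s + 2 * lam) with hFdef
  have hF : F = fun s : ℝ => A * (-(Complex.I) * (((s : ℂ) + c)⁻¹ ^ (0 + 1))).re := by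
    funext s
    have hwre : ((s : ℂ) + c).re = s + k := by simp [hcdef]
    have hwim : ((s : ℂ) + c).im = -ω := by simp [hcdef]
    have hnsq : Complex.normSq ((s : ℂ) + c) = s ^ 2 + 2 * k * s + 2 * lam := by
      rw [Complex.normSq_apply, hwre, hwim]; nlinarith [hω2]
    have hre : (-(Complex.I) * (((s : ℂ) + c)⁻¹ ^ (0 + 1))).re = (((s : ℂ) + c)⁻¹).im := by
      simp [Complex.mul_re]
    rw [hre, Complex.inv_im, hwim, hnsq]
    have hD : 0 < s ^ 2 + 2 * k * s + 2 * lam := by nlinarith [hω2, sq_nonneg (s + k)]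
    simp only [hFdef, hAdef]
    field_simp
  rintro ⟨-, hmono⟩
  -- choose the order n and the point s₀
  set m : ℝ := min 1 (ω / (2 * k)) with hmdef
  have hm : 0 < m := lt_min one_pos (by positivity)
  set n : ℕ := ⌈(3 * π / 2) / m⌉₊ with hndef
  set θ : ℝ := 3 * π / (2 * ((n : ℝ) + 1)) with hθdef
  have hn1 : (0 : ℝ) < (n : ℝ) + 1 := by positivity
  have hθpos : 0 < θ := by
    have := Real.pi_pos; simp only [hθdef]; positivity
  have hθm : θ ≤ m := by
    have hceil : (3 * π / 2) / m ≤ (n : ℝ) := Nat.le_ceil _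
    have h1 : 3 * π / 2 ≤ (n : ℝ) * m := (div_le_iff₀ hm).mp hceil
    rw [hθdef, div_le_iff₀ (by positivity)]
    nlinarith [hm]
  have hθ1 : θ ≤ 1 := le_trans hθm (min_le_left _ _)
  have hθk : θ ≤ ω / (2 * k) := le_trans hθm (min_le_right _ _)
  have hsin : 0 < Real.sin θ :=
    Real.sin_pos_of_pos_of_lt_pi hθpos (lt_of_le_of_lt hθ1 (by linarith [Real.pi_gt_three]))
  have hsinle : Real.sin θ ≤ θ := Real.sin_le hθpos.le
  have hcos : 1 / 2 ≤ Real.cos θ := by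
    nlinarith [Real.one_sub_sq_div_two_le_cos (x := θ)]
  set s₀ : ℝ := ω * Real.cos θ / Real.sin θ - k with hs₀def
  have h2k : θ * (2 * k) ≤ ω := (le_div_iff₀ (by positivity)).mp hθk
  have hs₀ : 0 ≤ s₀ := by
    rw [hs₀def, sub_nonneg, le_div_iff₀ hsin]
    nlinarith [mul_le_mul_of_nonneg_left hsinle hk0.le,
      mul_le_mul_of_nonneg_left hcos hω.le]
  have hmθ : ((n : ℝ) + 1) * θ = 3 * π / 2 := by
    rw [hθdef]
    field_simp [hn1.ne']
  -- compute w and its inverse power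
  have hw : ((s₀ : ℂ) + c) = ((ω / Real.sin θ : ℝ) : ℂ) * Complex.exp (((-θ : ℝ) : ℂ) * Complex.I) := by
    rw [hs₀def, hcdef]
    exact w_helper ω θ k hsin.ne'
  have hwinv : ((s₀ : ℂ) + c)⁻¹ = ((Real.sin θ / ω : ℝ) : ℂ) * Complex.exp (((θ : ℝ) : ℂ) * Complex.I) := by
    rw [hw, mul_inv, ← Complex.ofReal_inv, inv_div, ← Complex.exp_neg]
    congr 1
    push_cast
    ring
  set ρ : ℝ := (Real.sin θ / ω) ^ (n + 1) with hρdef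
  have hρ : 0 < ρ := by positivity
  have hpow : (((s₀ : ℂ) + c)⁻¹) ^ (n + 1)
      = ((ρ : ℝ) : ℂ) * Complex.exp (((3 * π / 2 : ℝ) : ℂ) * Complex.I) := by
    rw [hwinv, mul_pow, ← Complex.ofReal_pow, ← Complex.exp_nat_mul, hρdef]
    congr 2
    have : ((n : ℂ) + 1) * (((θ : ℝ) : ℂ) * Complex.I) = ((((n : ℝ) + 1) * θ : ℝ) : ℂ) * Complex.I := by
      push_cast; ring
    push_cast
    rw [this, hmθ]
    push_cast
    ring
  -- evaluate the sign
  have hsin32 : Real.sin (3 * π / 2) = -1 := by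
    rw [show 3 * π / 2 = π / 2 + π by ring, Real.sin_add_pi, Real.sin_pi_div_two]
  have hre : (-(Complex.I) * ((-1 : ℂ) ^ n * (Nat.factorial n : ℂ) *
      (((s₀ : ℂ) + c)⁻¹ ^ (n + 1)))).re
      = (-1 : ℝ) ^ n * (Nat.factorial n : ℝ) * ρ * Real.sin (3 * π / 2) := by
    rw [hpow]
    have hcomb : (-1 : ℂ) ^ n * (Nat.factorial n : ℂ) * (((ρ : ℝ) : ℂ) *
        Complex.exp (((3 * π / 2 : ℝ) : ℂ) * Complex.I))
        = ((((-1 : ℝ) ^ n * (Nat.factorial n : ℝ) * ρ : ℝ)) : ℂ) *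
          Complex.exp (((3 * π / 2 : ℝ) : ℂ) * Complex.I) := by
      push_cast; ring
    rw [hcomb, re_helper]
  have hkey := hmono n s₀ (mem_Ici.mpr hs₀)
  rw [claimB c hc A F hF n s₀ (mem_Ici.mpr hs₀), claimA c hc A F hF n] at hkey
  simp only at hkey
  rw [hre, hsin32] at hkey
  have hsq : (-1 : ℝ) ^ n * (-1 : ℝ) ^ n = 1 := by
    rw [← mul_pow]; norm_num
  have hfac : (0 : ℝ) < (Nat.factorial n : ℝ) := by positivity
  have heq : (-1 : ℝ) ^ n * (A * ((-1 : ℝ) ^ n * (Nat.factorial n : ℝ) * ρ * -1))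
      = -((-1 : ℝ) ^ n * (-1 : ℝ) ^ n * (A * (Nat.factorial n : ℝ) * ρ)) := by ring
  rw [heq, hsq, one_mul] at hkey
  nlinarith [mul_pos (mul_pos hA hfac) hρ]


end Helpers

/-- Sharp threshold for the gamma target: for `k ≥ √(2λ)` the function
`s ↦ (2λ/(s² + 2ks + 2λ))^γ` is the Laplace transform of a probability
distribution on `[0,∞)`, while for `0 < k < √(2λ)` and `γ = 1` the function
`s ↦ 2λ/(s² + 2ks + 2λ)` is not completely monotone. -/
theorem gamma_target_threshold (lam gam : ℝ) (hlam : 0 < lam) (hgam : 0 < gam) :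
    (∀ k : ℝ, Real.sqrt (2 * lam) ≤ k →
        ∃ μ : Measure ℝ, IsProbabilityMeasure μ ∧ μ {x | x < 0} = 0 ∧
          ∀ s : ℝ, 0 ≤ s →
            (∫ x, Real.exp (-s * x) ∂μ)
              = (2 * lam / (s ^ 2 + 2 * k * s + 2 * lam)) ^ gam) ∧
      ∀ k : ℝ, 0 < k → k < Real.sqrt (2 * lam) →
        ¬ CompletelyMonotone (fun s => 2 * lam / (s ^ 2 + 2 * k * s + 2 * lam)) :=
  ⟨fun k hk => part1 lam gam hlam hgam k hk, fun k hk0 hk => part2 lam hlam k hk0 hk⟩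
end
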